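/- Let b be an odd prime. Then the set {1, b} ∪ {b + j(b−1) : 1 ≤ j ≤ b−1} ∪ {b²} ∪ {b² + j(b−1) : 1 ≤ j ≤ b−1} is an arithmetic progression with common difference b−1 of length 2b+1, all of whose terms are b-anti-Niven. Hence the maximum length of a b-anti-Niven (b−1)-AP is at least 2b+1. -/
import Mathlib


/-- Base-`b` digit sum of `n`. -/
def sdig (b n : ℕ) : ℕ := (Nat.digits b n).sum

/-- A positive integer `n` is `b`-anti-Niven if it is coprime to its base-`b` digit sum. -/
def AntiNiven (b n : ℕ) : Prop := 0 < n ∧ Nat.gcd n (sdig b n) = 1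

lemma sdig_of_lt (b m : ℕ) (hb : 1 < b) (hm : m < b) : sdig b m = m := by
  rcases Nat.eq_zero_or_pos m with h | h
  · simp [sdig, h]
  · unfold sdig
    rw [Nat.digits_def' hb h, Nat.mod_eq_of_lt hm, Nat.div_eq_of_lt hm]
    simp

lemma sdig_mul_add (b q r : ℕ) (hb : 1 < b) (hr : r < b) :
    sdig b (b * q + r) = sdig b q + r := by
  rcases Nat.eq_zero_or_pos (b * q + r) with h | h
  · have hq : q = 0 := by
      rcases Nat.eq_zero_or_pos q with h' | h'
      · exact h'
      · nlinarith
    have hr0 : r = 0 := by omega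
    simp [sdig, hq, hr0]
  · unfold sdig
    rw [Nat.digits_def' hb h, List.sum_cons]
    have h1 : (b * q + r) % b = r := by
      rw [Nat.mul_add_mod, Nat.mod_eq_of_lt hr]
    have h2 : (b * q + r) / b = q := by
      rw [Nat.mul_add_div (by omega), Nat.div_eq_of_lt hr]
      omega
    rw [h1, h2]
    exact Nat.add_comm r _

theorem stmt_18 (b : ℕ) (hp : b.Prime) (hodd : Odd b) :
    (∀ j : ℕ, j ≤ 2 * b → AntiNiven b (1 + j * (b - 1))) ∧
    (∃ n : ℕ, 0 < n ∧ ∀ j : ℕ, j < 2 * b + 1 → AntiNiven b (n + j * (b - 1))) := by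
  have hodd' : b % 2 = 1 := Nat.odd_iff.mp hodd
  have hb2 : 2 ≤ b := hp.two_le
  have hb3 : 3 ≤ b := by omega
  have hb1 : 1 < b := by omega
  have main : ∀ j : ℕ, j ≤ 2 * b → AntiNiven b (1 + j * (b - 1)) := by
    intro j hj
    refine ⟨by omega, ?_⟩
    obtain hj0 | hj1 | hmid | hjb1 | hhigh :
        j = 0 ∨ j = 1 ∨ (2 ≤ j ∧ j ≤ b) ∨ j = b + 1 ∨ (b + 2 ≤ j ∧ j ≤ 2 * b) := by omega
    · subst hj0; simp [sdig]
    · subst hj1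
      have hn : 1 + 1 * (b - 1) = b * 1 + 0 := by omega
      rw [hn, sdig_mul_add b 1 0 hb1 (by omega), sdig_of_lt b 1 hb1 (by omega)]
      simp
    · obtain ⟨h2, hjb⟩ := hmid
      have hn : 1 + j * (b - 1) = b * (j - 1) + (b + 1 - j) := by
        zify [show 1 ≤ b by omega, show 1 ≤ j by omega, show j ≤ b + 1 by omega]
        ring
      rw [hn, sdig_mul_add b (j - 1) (b + 1 - j) hb1 (by omega),
        sdig_of_lt b (j - 1) hb1 (by omega)]
      have hs : j - 1 + (b + 1 - j) = b := by omega
      rw [hs]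
      have hnd : ¬ b ∣ (b * (j - 1) + (b + 1 - j)) := by
        intro hd
        have h1 : b ∣ (b + 1 - j) := (Nat.dvd_add_right ⟨j - 1, rfl⟩).mp hd
        have h2 := Nat.le_of_dvd (by omega) h1
        omega
      exact Nat.coprime_comm.mp (hp.coprime_iff_not_dvd.mpr hnd)
    · subst hjb1
      have hn : 1 + (b + 1) * (b - 1) = b * (b * 1 + 0) + 0 := by
        zify [show 1 ≤ b by omega]
        ring
      rw [hn, sdig_mul_add b (b * 1 + 0) 0 hb1 (by omega),
        sdig_mul_add b 1 0 hb1 (by omega), sdig_of_lt b 1 hb1 (by omega)]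
      simp
    · obtain ⟨hlo, hhi⟩ := hhigh
      set k := j - (b + 1) with hk
      have hk1 : 1 ≤ k := by omega
      have hkb : k ≤ b - 1 := by omega
      have hj : j = b + 1 + k := by omega
      have hn : 1 + j * (b - 1) = b * (b * 1 + (k - 1)) + (b - k) := by
        rw [hj]
        zify [show 1 ≤ b by omega, show 1 ≤ k by omega, show k ≤ b by omega]
        ring
      rw [hn, sdig_mul_add b (b * 1 + (k - 1)) (b - k) hb1 (by omega),
        sdig_mul_add b 1 (k - 1) hb1 (by omega), sdig_of_lt b 1 hb1 (by omega)]
      have hs : 1 + (k - 1) + (b - k) = b := by omega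
      rw [hs]
      have hnd : ¬ b ∣ (b * (b * 1 + (k - 1)) + (b - k)) := by
        intro hd
        have h1 : b ∣ (b - k) := (Nat.dvd_add_right ⟨b * 1 + (k - 1), rfl⟩).mp hd
        have h2 := Nat.le_of_dvd (by omega) h1
        omega
      exact Nat.coprime_comm.mp (hp.coprime_iff_not_dvd.mpr hnd)
  exact ⟨main, 1, one_pos, fun j hj => main j (by omega)⟩
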